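/- Let α ∈ (1/3, 1/2), θ = 3α > 1, and let D : {(s,t) : 0 ≤ s ≤ t ≤ T} → ℝ^v be a function such that the coboundary D(s,r,t) := D(s,t) - D(s,r) - D(r,t) satisfies sup_{0≤s<r<t≤T} |D(s,r,t)|/(t-s)^θ =: A < ∞. Suppose X̂ : [0,T] → ℝ^v is continuous and there exists L with |X̂_t - X̂_s - D(s,t)| ≤ L (t-s)^θ for all s ≤ t. Then the optimal L satisfies L ≤ K · A for a universal constant K depending only on θ. -/

import Mathlib

/-!
Splitting `[s, t]` at its midpoint `r` writes the remainder `X t - X s - D s t` as the sum of the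
remainders on `[s, r]` and `[r, t]` minus the coboundary `D s t - D s r - D r t`. Hence a bound
`M (t - s)^θ` on all remainders improves to `(2^(1-θ) M + A) (t - s)^θ`. Since `θ > 1` the map
`M ↦ 2^(1-θ) M + A` is a contraction, and iterating it from the a priori constant `L₀` drives the
constant down to its fixed point `A / (1 - 2^(1-θ))`.
-/

open Filter Topology

theorem le_inv_one_sub_mul_of_affine_improvement {ι : Type*} (S : Set ι) (a b : ι → ℝ)
    {c A L : ℝ} (hc₀ : 0 ≤ c) (hc₁ : c < 1) (hL : ∀ i ∈ S, a i ≤ L * b i)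
    (hstep : ∀ M, (∀ i ∈ S, a i ≤ M * b i) → ∀ i ∈ S, a i ≤ (c * M + A) * b i)
    {i : ι} (hi : i ∈ S) : a i ≤ (1 - c)⁻¹ * A * b i := by
  set K := (1 - c)⁻¹ * A
  have hfix : c * K + A = K := by
    have : 1 - c ≠ 0 := by linarith
    simp only [K]
    field_simp
    ring
  have hiter : ∀ n : ℕ, ∀ j ∈ S, a j ≤ (c ^ n * (L - K) + K) * b j := by
    intro n
    induction n with
    | zero => simpa using hL
    | succ n ih =>
      intro j hj
      have h := hstep _ ih j hj
      rwa [show c * (c ^ n * (L - K) + K) + A = c ^ (n + 1) * (L - K) + K by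
        linear_combination hfix] at h
  have hlim : Tendsto (fun n : ℕ => (c ^ n * (L - K) + K) * b i) atTop (𝓝 (K * b i)) := by
    simpa using (((tendsto_pow_atTop_nhds_zero_of_lt_one hc₀ hc₁).mul_const (L - K)).add_const
      K).mul_const (b i)
  exact ge_of_tendsto' hlim fun n => hiter n i hi

theorem two_mul_half_rpow {x : ℝ} (hx : 0 ≤ x) (θ : ℝ) :
    2 * (x / 2) ^ θ = 2 ^ (1 - θ) * x ^ θ := by
  rw [Real.div_rpow hx zero_le_two, Real.rpow_sub two_pos, Real.rpow_one]
  ring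

section Sewing

variable {E : Type*} [SeminormedAddCommGroup E] {θ T A M : ℝ} {D : ℝ → ℝ → E} {X : ℝ → E}

theorem norm_remainder_le_of_midpoint (hθ : 0 < θ)
    (hcob : ∀ s r t : ℝ, 0 ≤ s → s < r → r < t → t ≤ T →
      ‖D s t - D s r - D r t‖ ≤ A * (t - s) ^ θ)
    (hM : ∀ s t : ℝ, 0 ≤ s → s ≤ t → t ≤ T → ‖X t - X s - D s t‖ ≤ M * (t - s) ^ θ)
    {s t : ℝ} (hs : 0 ≤ s) (hst : s ≤ t) (htT : t ≤ T) :
    ‖X t - X s - D s t‖ ≤ (2 ^ (1 - θ) * M + A) * (t - s) ^ θ := by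
  rcases hst.eq_or_lt with rfl | hlt
  · simpa [Real.zero_rpow hθ.ne'] using hM s s hs le_rfl htT
  set r := (s + t) / 2
  have hsr : s < r := by simp only [r]; linarith
  have hrt : r < t := by simp only [r]; linarith
  have hleft := hM s r hs hsr.le (hrt.le.trans htT)
  have hright := hM r t (hs.trans hsr.le) hrt.le htT
  have hr_sub : r - s = (t - s) / 2 := by simp only [r]; ring
  have ht_sub : t - r = (t - s) / 2 := by simp only [r]; ring
  rw [hr_sub] at hleft
  rw [ht_sub] at hright
  have hsplit : X t - X s - D s t =
      (X r - X s - D s r) + (X t - X r - D r t) - (D s t - D s r - D r t) := by abel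
  calc ‖X t - X s - D s t‖
      ≤ ‖X r - X s - D s r‖ + ‖X t - X r - D r t‖ + ‖D s t - D s r - D r t‖ := by
        rw [hsplit]
        exact (norm_sub_le _ _).trans (add_le_add_left (norm_add_le _ _) _)
    _ ≤ M * (2 * ((t - s) / 2) ^ θ) + A * (t - s) ^ θ := by
        linarith [hcob s r t hs hsr hrt htT]
    _ = (2 ^ (1 - θ) * M + A) * (t - s) ^ θ := by
        rw [two_mul_half_rpow (sub_nonneg.2 hst)]
        ring

end Sewing

theorem sewing_estimate_general (α θ : ℝ) (hα₁ : 1 / 3 < α)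
    (hθ : θ = 3 * α) :
    ∃ K : ℝ, 0 < K ∧
      ∀ (v : ℕ) (T : ℝ), 0 < T →
        ∀ (D : ℝ → ℝ → EuclideanSpace ℝ (Fin v))
          (X : ℝ → EuclideanSpace ℝ (Fin v)) (A L₀ : ℝ),
          0 ≤ A → 0 ≤ L₀ →
          ContinuousOn X (Set.Icc 0 T) →
          (∀ s r t : ℝ, 0 ≤ s → s < r → r < t → t ≤ T →
            ‖D s t - D s r - D r t‖ ≤ A * (t - s) ^ θ) →
          (∀ s t : ℝ, 0 ≤ s → s ≤ t → t ≤ T →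
            ‖X t - X s - D s t‖ ≤ L₀ * (t - s) ^ θ) →
          ∀ s t : ℝ, 0 ≤ s → s ≤ t → t ≤ T →
            ‖X t - X s - D s t‖ ≤ K * A * (t - s) ^ θ := by
  have hθ₁ : 1 < θ := by linarith
  have hc₁ : (2 : ℝ) ^ (1 - θ) < 1 := Real.rpow_lt_one_of_one_lt_of_neg one_lt_two (by linarith)
  refine ⟨(1 - 2 ^ (1 - θ))⁻¹, inv_pos.2 (sub_pos.2 hc₁), ?_⟩
  intro v T _ D X A L₀ _ _ _ hcob happrox s t hs hst htT
  let S : Set (ℝ × ℝ) := {p | 0 ≤ p.1 ∧ p.1 ≤ p.2 ∧ p.2 ≤ T}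
  exact le_inv_one_sub_mul_of_affine_improvement S (fun p => ‖X p.2 - X p.1 - D p.1 p.2‖)
    (fun p => (p.2 - p.1) ^ θ) (by positivity) hc₁
    (fun p ⟨h₁, h₂, h₃⟩ => happrox p.1 p.2 h₁ h₂ h₃)
    (fun M hM p ⟨h₁, h₂, h₃⟩ => norm_remainder_le_of_midpoint (by linarith) hcob
      (fun s t hs hst htT => hM (s, t) ⟨hs, hst, htT⟩) h₁ h₂ h₃)
    (i := (s, t)) ⟨hs, hst, htT⟩

/-- **Sewing lemma estimate.** Let `θ = 3α > 1` with `α ∈ (1/3, 1/2)`. If the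
coboundary `D(s,t) - D(s,r) - D(r,t)` is bounded by `A (t-s)^θ` and `X̂` is a
continuous path whose increments are approximated by `D` with a `θ`-Hölder remainder
(constant `L₀`), then the remainder is in fact bounded by `K·A (t-s)^θ` for a
universal constant `K` depending only on `θ`. -/
theorem sewing_estimate (α θ : ℝ) (hα₁ : 1 / 3 < α) (hα₂ : α < 1 / 2)
    (hθ : θ = 3 * α) :
    ∃ K : ℝ, 0 < K ∧
      ∀ (v : ℕ) (T : ℝ), 0 < T →
        ∀ (D : ℝ → ℝ → EuclideanSpace ℝ (Fin v))
          (X : ℝ → EuclideanSpace ℝ (Fin v)) (A L₀ : ℝ),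
          0 ≤ A → 0 ≤ L₀ →
          ContinuousOn X (Set.Icc 0 T) →
          (∀ s r t : ℝ, 0 ≤ s → s < r → r < t → t ≤ T →
            ‖D s t - D s r - D r t‖ ≤ A * (t - s) ^ θ) →
          (∀ s t : ℝ, 0 ≤ s → s ≤ t → t ≤ T →
            ‖X t - X s - D s t‖ ≤ L₀ * (t - s) ^ θ) →
          ∀ s t : ℝ, 0 ≤ s → s ≤ t → t ≤ T →
            ‖X t - X s - D s t‖ ≤ K * A * (t - s) ^ θ :=
  sewing_estimate_general α θ hα₁ hθ
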